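/- arXiv:1706.01846 — 3 statements merged into one kernel-verified Lean document; each statement's English description precedes it below -/
import Mathlib

section
/- Let $P$ be an $n \times n$ symmetric idempotent matrix (orthogonal projection), $Z$ an $n \times q$ matrix, and $D$ a $q \times q$ symmetric positive definite matrix. Then $(I - P) Z (Z^T (I-P) Z + D)^{-1} Z^T (I - P) \preceq I - P$. -/
/-!
With `Q = I - P` and `W = Q Z`, the matrix `Zᵀ Q Z + D` equals `Wᵀ W + D`, and the Woodbury identity
gives `I - W (Wᵀ W + D)⁻¹ Wᵀ = (I + W D⁻¹ Wᵀ)⁻¹`, which is positive definite. Conjugating by the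
orthogonal projection `Q`, which fixes `W`, turns this into the claim.
-/

open Matrix

namespace Matrix

variable {m n : Type*} [Fintype m] [Fintype n] [DecidableEq m] [DecidableEq n]

theorem inv_one_add_mul_inv_mul {R : Type*} [CommRing R] {D : Matrix n n R}
    (W : Matrix m n R) (V : Matrix n m R) (hD : IsUnit D) (hVWD : IsUnit (V * W + D)) :
    (1 + W * D⁻¹ * V)⁻¹ = 1 - W * (V * W + D)⁻¹ * V := by
  have hD' : D⁻¹⁻¹ = D := nonsing_inv_nonsing_inv D ((isUnit_iff_isUnit_det D).mp hD)
  rw [add_mul_mul_inv_eq_sub 1 W D⁻¹ V isUnit_one (isUnit_nonsing_inv_iff.mpr hD)]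
  · simp only [inv_one, hD', Matrix.one_mul, Matrix.mul_one, add_comm D]
  · simpa only [inv_one, hD', Matrix.mul_one, add_comm D] using hVWD

theorem PosSemidef.sub_mul_mul_of_isHermitian_of_isIdempotentElem {R : Type*} [Ring R]
    [PartialOrder R] [StarRing R] {Q X : Matrix n n R}
    (hQ : Q.IsHermitian) (hQQ : IsIdempotentElem Q) (hX : (1 - X).PosSemidef) :
    (Q - Q * X * Q).PosSemidef := by
  have h := hX.mul_mul_conjTranspose_same Q
  rwa [hQ.eq, mul_sub, sub_mul, mul_one, hQQ.eq] at h

theorem PosDef.one_sub_mul_inv_conjTranspose_mul_self_add_mul_conjTranspose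
    {K : Type*} [Field K] [PartialOrder K] [StarRing K] [StarOrderedRing K]
    {D : Matrix n n K} (hD : D.PosDef) (W : Matrix m n K) :
    (1 - W * (Wᴴ * W + D)⁻¹ * Wᴴ).PosDef := by
  have hWD : (Wᴴ * W + D).PosDef := PosDef.posSemidef_add (posSemidef_conjTranspose_mul_self W) hD
  rw [← inv_one_add_mul_inv_mul W Wᴴ hD.isUnit hWD.isUnit]
  exact (PosDef.one.add_posSemidef (hD.inv.posSemidef.mul_mul_conjTranspose_same W)).inv

end Matrix

/-- If `P` is an `n × n` orthogonal projection, `Z` is `n × q` and `D` is symmetric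
positive definite, then `(I-P) Z (Zᵀ(I-P)Z + D)⁻¹ Zᵀ (I-P) ⪯ I - P`. -/
theorem stmt_9 (n q : ℕ) (P : Matrix (Fin n) (Fin n) ℝ)
    (hPsymm : P.IsSymm) (hPidem : P * P = P)
    (Z : Matrix (Fin n) (Fin q) ℝ) (D : Matrix (Fin q) (Fin q) ℝ) (hD : D.PosDef) :
    ((1 - P) - (1 - P) * Z * (Zᵀ * (1 - P) * Z + D)⁻¹ * Zᵀ * (1 - P)).PosSemidef := by
  set Q := 1 - P
  have hQ : Q.IsHermitian := isHermitian_iff_isSymm.mpr (isSymm_one.sub hPsymm)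
  have hQQ : IsIdempotentElem Q := IsIdempotentElem.one_sub hPidem
  have hQZ : (Q * Z)ᴴ = Zᵀ * Q := by
    rw [conjTranspose_mul, hQ.eq, conjTranspose_eq_transpose_of_trivial]
  have hX := (hD.one_sub_mul_inv_conjTranspose_mul_self_add_mul_conjTranspose (Q * Z)).posSemidef
  rw [hQZ] at hX
  convert hX.sub_mul_mul_of_isHermitian_of_isIdempotentElem hQ hQQ using 2
  have hXQQ : ∀ {k : Type} (X : Matrix k (Fin n) ℝ), X * Q * Q = X * Q := fun X => by
    rw [Matrix.mul_assoc, hQQ.eq]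
  simp only [← Matrix.mul_assoc, hQQ.eq, hXQQ]
end

section
/- Let $A$ be a $q \times q$ symmetric positive semidefinite matrix with spectral decomposition $A = U^T \Lambda U$, Moore–Penrose pseudoinverse $A^+$, and let $P_A$ denote the orthogonal projection onto the column space of $A$. Let $D(\tau) = \oplus_{j=1}^r \tau_j I_{q_j}$ with all $\tau_j > 0$ and $\sum_j q_j = q$. Then $(A + D(\tau))^{-1} \preceq A^+ + \Big(\sum_{j=1}^r \tau_j^{-1}\Big) (I_q - P_A)$. -/
/-!
In the eigenbasis of `A`, the matrix `N = A⁺ + s (I - P_A)` with `s = ∑ⱼ τⱼ⁻¹` is diagonal with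
positive entries, and its inverse is `A + s⁻¹ (I - P_A) ⪯ A + s⁻¹ I`. Since every `τⱼ ≥ s⁻¹` we
have `s⁻¹ I ⪯ D(τ)`, so `N⁻¹ ⪯ A + D(τ)`, and inversion is antitone on positive definite matrices.
-/

open Matrix

namespace Matrix

lemma posSemidef_diagonal_comp_sub_inv_sum_inv {n κ : Type*} [DecidableEq n] [Fintype κ] (b : n → κ)
    {τ : κ → ℝ} (hτ : ∀ j, 0 < τ j) :
    (diagonal (fun i => τ (b i)) - (∑ j, (τ j)⁻¹)⁻¹ • 1).PosSemidef := by
  rw [← diagonal_one, ← diagonal_smul, diagonal_sub]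
  refine PosSemidef.diagonal fun i => sub_nonneg.2 ?_
  simp only [Pi.smul_apply, smul_eq_mul, mul_one]
  refine inv_le_of_inv_le₀ (hτ (b i)) ?_
  exact Finset.single_le_sum (fun j _ => (inv_pos.2 (hτ j)).le) (Finset.mem_univ (b i))

variable {n : Type*} [Fintype n] [DecidableEq n]

/-- Both inequalities are positivity of `fromBlocks M 1 1 N⁻¹`, read through its two Schur
complements. -/
lemma PosDef.posSemidef_inv_sub_inv {K : Type*} [Field K] [PartialOrder K] [StarRing K]
    [StarOrderedRing K] {M N : Matrix n n K} (hN : N.PosDef) (hNM : (M - N).PosSemidef) :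
    (N⁻¹ - M⁻¹).PosSemidef := by
  have hM : M.PosDef := by simpa using hN.add_posSemidef hNM
  let _ := hM.isUnit.invertible
  let _ := hN.isUnit.invertible
  let _ := hN.inv.isUnit.invertible
  have hblocks := (PosDef.fromBlocks₂₂ M 1 hN.inv).2 (by simpa [inv_inv_of_invertible] using hNM)
  simpa using (PosDef.fromBlocks₁₁ 1 N⁻¹ hM).1 (by simpa using hblocks)

noncomputable def orthogonalConjDiagonal (U : unitaryGroup n ℝ) : (n → ℝ) →ₐ[ℝ] Matrix n n ℝ :=
  (Unitary.conjStarAlgAut ℝ _ (star U)).toAlgEquiv.toAlgHom.comp (diagonalAlgHom ℝ)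

variable (U : unitaryGroup n ℝ)

lemma orthogonalConjDiagonal_apply (d : n → ℝ) :
    orthogonalConjDiagonal U d = star (U : Matrix n n ℝ) * diagonal d * U := by
  simp [orthogonalConjDiagonal]

lemma posSemidef_orthogonalConjDiagonal {d : n → ℝ} (hd : 0 ≤ d) :
    (orthogonalConjDiagonal U d).PosSemidef := by
  rw [orthogonalConjDiagonal_apply]
  exact (PosSemidef.diagonal hd).conjTranspose_mul_mul_same _

lemma posDef_orthogonalConjDiagonal {d : n → ℝ} (hd : ∀ i, 0 < d i) :
    (orthogonalConjDiagonal U d).PosDef := by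
  rw [orthogonalConjDiagonal_apply, Unitary.isUnit_coe.posDef_star_left_conjugate_iff]
  exact posDef_diagonal_iff.2 hd

/-- With `A = Uᵀ diag(l) U`, the pseudoinverse is `A⁺ = Uᵀ diag(l⁻¹) U` (as `0⁻¹ = 0`) and the
projection onto the column space is `P_A = Uᵀ diag(1_{supp l}) U`. -/
lemma inv_add_le_pinv_add_smul_one_sub_proj {l : n → ℝ} (hl : 0 ≤ l) {D : Matrix n n ℝ} {s : ℝ}
    (hs : 0 < s) (hD : (D - s⁻¹ • 1).PosSemidef) :
    (orthogonalConjDiagonal U l⁻¹ +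
        s • (1 - orthogonalConjDiagonal U ((Function.support l).indicator 1)) -
      (orthogonalConjDiagonal U l + D)⁻¹).PosSemidef := by
  set φ := orthogonalConjDiagonal U
  set e : n → ℝ := (Function.support l).indicator 1
  have he : 0 ≤ e := Set.indicator_nonneg fun _ _ => zero_le_one
  set f := l⁻¹ + s • (1 - e)
  set g := l + s⁻¹ • (1 - e)
  have hfg : f * g = 1 := by
    ext i
    by_cases h : l i = 0 <;> simp [g, f, e, h, hs.ne']
  have hg : ∀ i, 0 < g i := by
    intro i
    by_cases h : l i = 0
    · simpa [g, e, h] using hs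
    · simpa [g, e, h] using (hl i).lt_of_ne' h
  have hφg : φ g = φ l + s⁻¹ • (1 - φ e) := by simp [g]
  have hφf : φ f = (φ g)⁻¹ := (inv_eq_left_inv (by rw [← map_mul, hfg, map_one])).symm
  have hgD : (φ l + D - φ g).PosSemidef := by
    have : φ l + D - φ g = (D - s⁻¹ • 1) + s⁻¹ • φ e := by rw [hφg]; module
    rw [this]
    exact hD.add ((posSemidef_orthogonalConjDiagonal U he).smul (inv_pos.2 hs).le)
  have key := (posDef_orthogonalConjDiagonal U hg).posSemidef_inv_sub_inv hgD
  rwa [← hφf, map_add, map_smul, map_sub, map_one] at key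

end Matrix

theorem stmt_10_general (q r : ℕ) (U : Matrix (Fin q) (Fin q) ℝ)
    (hU : Uᵀ * U = 1)
    (l : Fin q → ℝ) (hl : ∀ i, 0 ≤ l i)
    (A : Matrix (Fin q) (Fin q) ℝ) (hA : A = Uᵀ * diagonal l * U)
    (b : Fin q → Fin r)
    (τ : Fin r → ℝ) (hτ : ∀ j, 0 < τ j)
    (Aplus PA : Matrix (Fin q) (Fin q) ℝ)
    (hAplus : Aplus = Uᵀ * diagonal (fun i => if l i = 0 then 0 else (l i)⁻¹) * U)
    (hPA : PA = Uᵀ * diagonal (fun i => if l i = 0 then (0:ℝ) else 1) * U) :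
    ((Aplus + (∑ j, (τ j)⁻¹) • (1 - PA)) - (A + diagonal (fun i => τ (b i)))⁻¹).PosSemidef := by
  rcases isEmpty_or_nonempty (Fin q) with hq | ⟨⟨i₀⟩⟩
  · rw [Subsingleton.elim (_ - _) 0]
    exact .zero
  have : Nonempty (Fin r) := ⟨b i₀⟩
  have hs : 0 < ∑ j, (τ j)⁻¹ := Finset.sum_pos (fun j _ => inv_pos.2 (hτ j)) Finset.univ_nonempty
  have hstar : star U = Uᵀ := by rw [star_eq_conjTranspose, conjTranspose_eq_transpose_of_trivial]
  let V : unitaryGroup (Fin q) ℝ := ⟨U, mem_unitaryGroup_iff'.2 (hstar ▸ hU)⟩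
  have hV (d : Fin q → ℝ) : Uᵀ * diagonal d * U = orthogonalConjDiagonal V d := by
    rw [orthogonalConjDiagonal_apply, hstar]
  have hpinv : (fun i => if l i = 0 then 0 else (l i)⁻¹) = l⁻¹ := by
    ext i; split_ifs with h <;> simp [h]
  have hproj : (fun i => if l i = 0 then (0:ℝ) else 1) = (Function.support l).indicator 1 := by
    ext i; by_cases h : l i = 0 <;> simp [h]
  subst hA hAplus hPA
  rw [hpinv, hproj, hV, hV, hV]
  exact inv_add_le_pinv_add_smul_one_sub_proj V hl hs
    (posSemidef_diagonal_comp_sub_inv_sum_inv b hτ)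

/-- Lemma A.1, part 1. Let `A = Uᵀ Λ U` be a symmetric positive semidefinite matrix
given via its spectral decomposition (`U` orthogonal, `Λ = diagonal l` with `l ≥ 0`),
with Moore–Penrose pseudoinverse `A⁺ = Uᵀ Λ⁺ U` and `P_A = Uᵀ (sign Λ) U` the orthogonal
projection onto the column space of `A`.  Let `D(τ) = ⊕ⱼ τⱼ I_{qⱼ}` be block diagonal
with all `τⱼ > 0` (encoded via the block-index map `b : Fin q → Fin r`).  Then
`(A + D(τ))⁻¹ ⪯ A⁺ + (∑ⱼ τⱼ⁻¹)(I − P_A)`. -/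
theorem stmt_10 (q r : ℕ) (U : Matrix (Fin q) (Fin q) ℝ)
    (hU : Uᵀ * U = 1) (hU' : U * Uᵀ = 1)
    (l : Fin q → ℝ) (hl : ∀ i, 0 ≤ l i)
    (A : Matrix (Fin q) (Fin q) ℝ) (hA : A = Uᵀ * diagonal l * U)
    (b : Fin q → Fin r) (hbsurj : Function.Surjective b)
    (τ : Fin r → ℝ) (hτ : ∀ j, 0 < τ j)
    (Aplus PA : Matrix (Fin q) (Fin q) ℝ)
    (hAplus : Aplus = Uᵀ * diagonal (fun i => if l i = 0 then 0 else (l i)⁻¹) * U)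
    (hPA : PA = Uᵀ * diagonal (fun i => if l i = 0 then (0:ℝ) else 1) * U) :
    ((Aplus + (∑ j, (τ j)⁻¹) • (1 - PA)) - (A + diagonal (fun i => τ (b i)))⁻¹).PosSemidef :=
  stmt_10_general q r U hU l hl A hA b τ hτ Aplus PA hAplus hPA
end

section
/- Let $t_1, \dots, t_n \in \mathbb{R}^q$ and fix $i \in \{1,\dots,n\}$. Define $\hat\varphi_i^2 = \sup_{\iota \in \mathbb{R}_+^{n+q}} t_i^T \Big( t_i t_i^T + \sum_{k \ne i} \iota_k t_k t_k^T + \sum_{k=n+1}^{n+q} \iota_k e_{k-n} e_{k-n}^T + \iota_1 I_q \Big)^{-2} t_i$, where $e_1, \dots, e_q$ are the standard basis vectors of $\mathbb{R}^q$. Then $\hat\varphi_i^2 < \infty$. -/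
/-!
Write `M = Aᵀ W A`, where the rows of `A` are `e₁, …, e_q, t₁, …, t_n` and `W` is the diagonal
matrix of the nonnegative weights `ι_{n+j} + ι₁` and `ι_k` (with weight `1` on `tᵢ`), so that also
`tᵢ = Aᵀ W u` for the unit vector `u` at the row of `tᵢ`. Then `M⁻¹ tᵢ = (Aᵀ W A)⁻¹ Aᵀ W u` is a
weighted least-squares solution.
By Cramer's rule and the Cauchy–Binet formula each of its coordinates is an average, with the
nonnegative weights `(∏ W) (det A_S)²`, of ratios of `q × q` minors of `A` and of `A` with a
column replaced; these ratios do not involve `ι`, so the coordinates are bounded uniformly in `ι`.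
Finally `tᵢᵀ M⁻² tᵢ = ‖M⁻¹ tᵢ‖²` because `M` is symmetric.
-/

open Matrix Finset

variable {K : Type*} [Field K] [LinearOrder K] [IsStrictOrderedRing K]

/-- Terms with `α i = 0` vanish on the left and contribute `|β i / 0| = 0` on the right. -/
theorem abs_sum_mul_mul_le {κ : Type*} (s : Finset κ) {π α β : κ → K}
    (hπ : ∀ i ∈ s, 0 ≤ π i) :
    |∑ i ∈ s, π i * (α i * β i)| ≤ (∑ i ∈ s, |β i / α i|) * ∑ i ∈ s, π i * (α i * α i) := by
  rw [Finset.mul_sum]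
  refine (abs_sum_le_sum_abs _ _).trans (sum_le_sum fun i hi => ?_)
  have hratio : |β i / α i| ≤ ∑ i ∈ s, |β i / α i| :=
    single_le_sum (f := fun i => |β i / α i|) (fun i _ => abs_nonneg _) hi
  have hterm : |π i * (α i * β i)| = |β i / α i| * (π i * (α i * α i)) := by
    rcases eq_or_ne (α i) 0 with hα | hα
    · simp [hα]
    · rw [abs_mul, abs_of_nonneg (hπ i hi), abs_mul, abs_div, ← abs_mul_abs_self (α i)]
      field_simp
  rw [hterm]
  exact mul_le_mul_of_nonneg_right hratio (mul_nonneg (hπ i hi) (mul_self_nonneg _))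

namespace Matrix

section

variable {m ι R : Type*} [Fintype ι] [DecidableEq ι] [CommRing R]

theorem transpose_mul_diagonal_mul_eq_sum (a : ι → m → R) (w : ι → R) :
    (of a)ᵀ * diagonal w * of a = ∑ r, w r • vecMulVec (a r) (a r) := by
  ext p y
  rw [mul_apply]
  simp only [mul_diagonal, transpose_apply, of_apply, Matrix.sum_apply, smul_apply,
    vecMulVec_apply, smul_eq_mul]
  exact sum_congr rfl fun r _ => by ring

theorem transpose_transpose_mul_diagonal_mul (A : Matrix ι m R) (w : ι → R) :
    (Aᵀ * diagonal w * A)ᵀ = Aᵀ * diagonal w * A := by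
  rw [transpose_mul, transpose_mul, diagonal_transpose, transpose_transpose, Matrix.mul_assoc]

end

variable {m ι R : Type*} [Fintype m] [DecidableEq m] [Fintype ι]

theorem det_mul_eq_sum_prod_mul_det [CommRing R] (A : Matrix m ι R) (B : Matrix ι m R) :
    (A * B).det = ∑ f : m → ι, (∏ p, A p (f p)) * (B.submatrix f id).det := by
  have hrows : A * B = of fun p => ∑ r, A p r • B r := by
    ext p y
    simp [mul_apply, Finset.sum_apply]
  rw [hrows]
  change (detRowAlternating : (m → R) [⋀^m]→ₗ[R] R).toMultilinearMap
    (fun p => ∑ r, A p r • (B r : m → R)) = _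
  rw [MultilinearMap.map_sum]
  refine sum_congr rfl fun f _ => ?_
  rw [MultilinearMap.map_smul_univ]
  rfl

/-- The Cauchy–Binet formula, summed over all maps `m → ι` rather than over `m`-subsets of `ι`;
each subset is then counted `(card m)!` times. -/
theorem factorial_mul_det_mul [CommRing R] (A : Matrix m ι R) (B : Matrix ι m R) :
    ((Fintype.card m).factorial : R) * (A * B).det
      = ∑ f : m → ι, (A.submatrix id f).det * (B.submatrix f id).det := by
  have hperm : ∀ σ : Equiv.Perm m, (A * B).det
      = ∑ f : m → ι, (∏ p, A p (f (σ p))) * (σ.sign * (B.submatrix f id).det) := by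
    intro σ
    rw [det_mul_eq_sum_prod_mul_det, ← (Equiv.arrowCongr σ.symm (Equiv.refl ι)).sum_comp]
    refine sum_congr rfl fun f _ => ?_
    have hsub : B.submatrix (Equiv.arrowCongr σ.symm (Equiv.refl ι) f) id
        = (B.submatrix f id).submatrix σ id := rfl
    rw [hsub, det_permute]
    rfl
  calc ((Fintype.card m).factorial : R) * (A * B).det
      = ∑ σ : Equiv.Perm m, (A * B).det := by
        rw [sum_const, card_univ, Fintype.card_perm, nsmul_eq_mul]
    _ = ∑ f : m → ι, (∑ σ : Equiv.Perm m, σ.sign * ∏ p, A p (f (σ p)))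
          * (B.submatrix f id).det := by
        rw [sum_congr rfl fun σ _ => hperm σ, sum_comm, sum_congr rfl fun f _ => sum_mul ..]
        exact sum_congr rfl fun f _ => sum_congr rfl fun σ _ => by ring
    _ = _ := by
        refine sum_congr rfl fun f _ => ?_
        rw [← det_transpose (A.submatrix id f), det_apply' (A.submatrix id f)ᵀ]
        rfl

theorem det_diagonal_mul_submatrix [DecidableEq ι] [CommRing R] (w : ι → R) (X : Matrix ι m R)
    (f : m → ι) :
    ((diagonal w * X).submatrix f id).det = (∏ p, w (f p)) * (X.submatrix f id).det := by
  have h : (diagonal w * X).submatrix f id = diagonal (w ∘ f) * X.submatrix f id := by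
    ext p y
    simp
  rw [h, det_mul, det_diagonal]
  rfl

/-- The bound does not assume `Aᵀ W A` invertible: when it is singular, its `⁻¹` is `0`. -/
theorem exists_abs_inv_mulVec_weighted_le [DecidableEq ι] (A : Matrix ι m K) (c : ι → K)
    (j : m) :
    ∃ C, ∀ w : ι → K, 0 ≤ w →
      |((Aᵀ * diagonal w * A)⁻¹ *ᵥ ((Aᵀ * diagonal w) *ᵥ c)) j| ≤ C := by
  set α : (m → ι) → K := fun f => (Aᵀ.submatrix id f).det
  set β : (m → ι) → K := fun f => ((A.updateCol j c).submatrix f id).det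
  refine ⟨∑ f, |β f / α f|, fun w hw => ?_⟩
  set M := Aᵀ * diagonal w * A
  set π : (m → ι) → K := fun f => ∏ p, w (f p)
  have hπ : ∀ f ∈ univ, 0 ≤ π f := fun f _ => prod_nonneg fun p _ => hw (f p)
  have hdetM : ((Fintype.card m).factorial : K) * M.det = ∑ f, π f * (α f * α f) := by
    rw [show M = Aᵀ * (diagonal w * A) from Matrix.mul_assoc .., factorial_mul_det_mul]
    refine sum_congr rfl fun f _ => ?_
    rw [det_diagonal_mul_submatrix, ← det_transpose (A.submatrix f id), transpose_submatrix]
    simp only [π, α]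
    ring
  have hdetMj : ((Fintype.card m).factorial : K) * (M.updateCol j ((Aᵀ * diagonal w) *ᵥ c)).det
      = ∑ f, π f * (α f * β f) := by
    rw [← mul_updateCol, Matrix.mul_assoc, factorial_mul_det_mul]
    refine sum_congr rfl fun f _ => ?_
    rw [det_diagonal_mul_submatrix]
    simp only [π, α, β]
    ring
  have hfac : (0 : K) < (Fintype.card m).factorial := by positivity
  rcases eq_or_ne M.det 0 with hM | hM
  · rw [nonsing_inv_apply_not_isUnit M (by simp [hM]), zero_mulVec, Pi.zero_apply, abs_zero]
    exact sum_nonneg fun f _ => abs_nonneg _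
  have hMpos : 0 < M.det := by
    refine lt_of_le_of_ne (nonneg_of_mul_nonneg_right ?_ hfac) hM.symm
    rw [hdetM]
    exact sum_nonneg fun f hf => mul_nonneg (hπ f hf) (mul_self_nonneg _)
  have hcramer := congrFun (det_smul_inv_mulVec_eq_cramer M ((Aᵀ * diagonal w) *ᵥ c) hM.isUnit) j
  rw [Pi.smul_apply, smul_eq_mul, cramer_apply] at hcramer
  have hbound := abs_sum_mul_mul_le univ hπ (α := α) (β := β)
  rw [← hdetM, ← hdetMj, ← hcramer, abs_mul, abs_mul, abs_of_pos hfac, abs_of_pos hMpos,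
    ← mul_assoc, mul_comm _ (_ * M.det)] at hbound
  exact le_of_mul_le_mul_left hbound (mul_pos hfac hMpos)

theorem sum_vecMulVec_single_one [NonAssocSemiring R] :
    ∑ j : m, vecMulVec (Pi.single j (1 : R)) (Pi.single j 1) = 1 := by
  ext p y
  by_cases h : p = y
  · subst h
    simp [Matrix.sum_apply, vecMulVec_apply, Pi.single_apply]
  · simp [Matrix.sum_apply, vecMulVec_apply, Pi.single_apply, h]

theorem dotProduct_inv_mul_self_mulVec [CommRing R] {M : Matrix m m R} (hM : Mᵀ = M)
    (x : m → R) : x ⬝ᵥ ((M * M)⁻¹ *ᵥ x) = (M⁻¹ *ᵥ x) ⬝ᵥ (M⁻¹ *ᵥ x) := by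
  rw [mul_inv_rev, ← mulVec_mulVec, dotProduct_mulVec, ← vecMul_transpose,
    transpose_nonsing_inv, hM]

end Matrix

theorem ridge_gram_eq_transpose_mul_diagonal_mul {m κ R : Type*} [Fintype m] [DecidableEq m]
    [Fintype κ] [DecidableEq κ] [CommRing R] (t : κ → m → R) (i : κ) (ι : κ ⊕ m → R) (s : R) :
    vecMulVec (t i) (t i) + ∑ k ∈ univ.erase i, ι (Sum.inl k) • vecMulVec (t k) (t k)
      + ∑ j : m, ι (Sum.inr j) • vecMulVec (Pi.single j (1 : R)) (Pi.single j (1 : R)) + s • 1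
    = (of (Sum.elim (fun j => Pi.single j 1) t))ᵀ
        * diagonal (Sum.elim (fun j => ι (Sum.inr j) + s)
            (Function.update (fun k => ι (Sum.inl k)) i 1))
        * of (Sum.elim (fun j => Pi.single j 1) t) := by
  rw [transpose_mul_diagonal_mul_eq_sum, Fintype.sum_sum_type, ← add_sum_erase _ _ (mem_univ i)]
  simp only [Sum.elim_inl, Sum.elim_inr, add_smul, sum_add_distrib, ← smul_sum,
    sum_vecMulVec_single_one, Function.update_self, one_smul]
  have hupdate : ∑ k ∈ univ.erase i,
        Function.update (fun k => ι (Sum.inl k)) i 1 k • vecMulVec (t k) (t k)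
      = ∑ k ∈ univ.erase i, ι (Sum.inl k) • vecMulVec (t k) (t k) :=
    sum_congr rfl fun k hk => by rw [Function.update_of_ne (ne_of_mem_erase hk)]
  rw [hupdate]
  abel

/-- Finiteness of the supremum `φ̂ᵢ²` from Lemma 3 of Roman & Hobert (2012):
with `M(ι) = tᵢtᵢᵀ + ∑_{k≠i} ι_k t_k t_kᵀ + ∑_j ι_{n+j} e_j e_jᵀ + ι₁ I`, the quantity
`sup_{ι ∈ ℝ₊^{n+q}} tᵢᵀ M(ι)⁻² tᵢ` is finite. -/
theorem stmt_16 (n q : ℕ) [NeZero n] (t : Fin n → Fin q → ℝ) (i : Fin n) :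
    ∃ C : ℝ, ∀ ι : Fin n ⊕ Fin q → ℝ, (∀ k, 0 < ι k) →
      (let M : Matrix (Fin q) (Fin q) ℝ :=
        vecMulVec (t i) (t i)
          + ∑ k ∈ Finset.univ.erase i, ι (Sum.inl k) • vecMulVec (t k) (t k)
          + ∑ j : Fin q, ι (Sum.inr j) •
              vecMulVec (Pi.single j (1:ℝ)) (Pi.single j (1:ℝ))
          + ι (Sum.inl 0) • (1 : Matrix (Fin q) (Fin q) ℝ);
        t i ⬝ᵥ ((M * M)⁻¹).mulVec (t i)) ≤ C := by
  set A : Matrix (Fin q ⊕ Fin n) (Fin q) ℝ := of (Sum.elim (fun j => Pi.single j 1) t)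
  choose C hC using exists_abs_inv_mulVec_weighted_le A (Pi.single (Sum.inr i) 1)
  refine ⟨∑ j, C j ^ 2, fun ι hι => ?_⟩
  set w := Sum.elim (fun j => ι (Sum.inr j) + ι (Sum.inl 0))
    (Function.update (fun k => ι (Sum.inl k)) i 1)
  have hw : ∀ r, 0 ≤ w r := by
    rintro (j | k)
    · exact add_nonneg (hι _).le (hι _).le
    · rcases eq_or_ne k i with rfl | hk
      · simp only [w, Sum.elim_inr, Function.update_self, zero_le_one]
      · simp only [w, Sum.elim_inr, Function.update_of_ne hk, (hι _).le]
  have hti : t i = (Aᵀ * diagonal w) *ᵥ Pi.single (Sum.inr i) 1 := by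
    ext p
    simp only [mulVec_single_one, col_apply, mul_diagonal, transpose_apply, A, w, of_apply,
      Sum.elim_inr, Function.update_self, mul_one]
  dsimp only
  rw [ridge_gram_eq_transpose_mul_diagonal_mul, hti,
    dotProduct_inv_mul_self_mulVec (transpose_transpose_mul_diagonal_mul A w)]
  refine sum_le_sum fun j _ => ?_
  rw [← abs_mul_abs_self, sq]
  exact mul_self_le_mul_self (abs_nonneg _) (hC j w hw)
end
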